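/- arXiv:1803.04325 — 3 statements merged into one kernel-verified Lean document; each statement's English description precedes it below -/
import Mathlib

section
/- Let f be a reconstruction period. If n and m are positive reals with n ≤ m + f(m), then f(m) ≥ f(n)/2. (This is the claim, made in the proof of Lemma 4.3 of the paper, that the value of the reconstruction period at the next reconstruction time is at least half its value at the current time.) -/
/-- A reconstruction period is a monotone nondecreasing function `f` from the
positive reals to the nonnegative reals satisfying `f x / 2 ≤ f (x/2)` and
`f (x/2) ≤ x/4` for all `x > 0`. If `n ≤ m + f m` for positive reals `n, m`,
then `f m ≥ f n / 2`. -/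
theorem stmt_1 (f : ℝ → ℝ)
    (hmono : ∀ x y : ℝ, 0 < x → x ≤ y → f x ≤ f y)
    (hnonneg : ∀ x : ℝ, 0 < x → 0 ≤ f x)
    (hhalf : ∀ x : ℝ, 0 < x → f x / 2 ≤ f (x / 2))
    (hquarter : ∀ x : ℝ, 0 < x → f (x / 2) ≤ x / 4)
    (n m : ℝ) (hn : 0 < n) (hm : 0 < m) (hle : n ≤ m + f m) :
    f n / 2 ≤ f m := by
  have hfm : f m ≤ m / 2 := by
    have := hquarter (2 * m) (by linarith)
    have h2 : (2 * m) / 2 = m := by ring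
    rw [h2] at this; linarith
  have hnm : n / 2 ≤ m := by linarith
  calc f n / 2 ≤ f (n / 2) := hhalf n hn
    _ ≤ f m := hmono _ _ (by linarith) hnm
end

section
/- Let f be a reconstruction period with f(x) > 0 for all x > 0. If n and m are reals with n ≥ 1, m ≥ 1, and n − f(m) ≤ m ≤ n + f(m), then (m · log m)/f(m) ≤ 4 · (n · log(2n))/f(n). (This is the quantitative core of Lemma 4.3 of the paper: the reconstruction cost m·log m, distributed equally over the f(m) updates between two consecutive reconstructions, charges each update at most O(n·log n / f(n)), where n is the number of edges at any fixed moment in the period and m is the number of edges at the next reconstruction time.) -/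
/-- A reconstruction period is a monotone nondecreasing function `f` from the
positive reals to the nonnegative reals satisfying `f x / 2 ≤ f (x/2)` and
`f (x/2) ≤ x/4` for all `x > 0`, here moreover positive on the positives.
If `n ≥ 1`, `m ≥ 1`, and `n - f m ≤ m ≤ n + f m`, then
`(m * log m) / f m ≤ 4 * (n * log (2n)) / f n`, where the logarithm is taken
to any fixed base `b > 1`. -/
theorem stmt_4 (f : ℝ → ℝ)
    (hmono : ∀ x y : ℝ, 0 < x → x ≤ y → f x ≤ f y)
    (hpos : ∀ x : ℝ, 0 < x → 0 < f x)
    (hhalf : ∀ x : ℝ, 0 < x → f x / 2 ≤ f (x / 2))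
    (hquarter : ∀ x : ℝ, 0 < x → f (x / 2) ≤ x / 4)
    (b : ℝ) (hb : 1 < b)
    (n m : ℝ) (hn : 1 ≤ n) (hm : 1 ≤ m)
    (hlow : n - f m ≤ m) (hhigh : m ≤ n + f m) :
    (m * Real.logb b m) / f m ≤ 4 * (n * Real.logb b (2 * n)) / f n := by
  have hm0 : (0:ℝ) < m := lt_of_lt_of_le one_pos hm
  have hn0 : (0:ℝ) < n := lt_of_lt_of_le one_pos hn
  have hfm : 0 < f m := hpos m hm0
  have hfn : 0 < f n := hpos n hn0
  have h2m : (0:ℝ) < 2 * m := by linarith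
  have hfm_le : f m ≤ m / 2 := by
    have h := hquarter (2 * m) h2m
    have e : (2 * m) / 2 = m := by ring
    rw [e] at h
    linarith
  have hm2n : m ≤ 2 * n := by linarith
  have hn2m : n ≤ 2 * m := by linarith
  have hfn2 : f n ≤ 2 * f m := by
    have h1 : f n ≤ f (2 * m) := hmono n (2 * m) hn0 hn2m
    have h2 := hhalf (2 * m) h2m
    have e : (2 * m) / 2 = m := by ring
    rw [e] at h2
    linarith
  have hlogm : 0 ≤ Real.logb b m := Real.logb_nonneg hb hm
  have hlog2n : 0 ≤ Real.logb b (2 * n) := Real.logb_nonneg hb (by linarith)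
  have hlogle : Real.logb b m ≤ Real.logb b (2 * n) :=
    Real.logb_le_logb_of_le hb hm0 hm2n
  have hnum : m * Real.logb b m ≤ 2 * n * Real.logb b (2 * n) :=
    mul_le_mul hm2n hlogle hlogm (by linarith)
  rw [div_le_div_iff₀ hfm hfn]
  have h1 : m * Real.logb b m * f n ≤ (2 * n * Real.logb b (2 * n)) * (2 * f m) := by
    apply mul_le_mul hnum hfn2 (le_of_lt hfn)
    positivity
  nlinarith
end

section
/- Let f be a reconstruction period with f(x) > 0 for all x > 0. If n, m, and k are positive reals with n − f(m) ≤ m ≤ n + f(m) and k ≤ n + f(m), then k/f(m) ≤ 4n/f(n). (This is the quantitative core of Lemma 4.4 of the paper: the k ≤ n_i old edges set to communal during a period between two consecutive reconstructions, distributed equally over the f(m) updates in that period, charge each update at most O(n/f(n)), where n is the number of edges at any fixed moment in the period and m is the number of edges at the next reconstruction time.) -/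
/-- A reconstruction period is a monotone nondecreasing function `f` from the
positive reals to the nonnegative reals satisfying `f x / 2 ≤ f (x/2)` and
`f (x/2) ≤ x/4` for all `x > 0`, here moreover positive on the positives.
If `n - f m ≤ m ≤ n + f m` and `k ≤ n + f m` for positive reals `n, m, k`,
then `k / f m ≤ 4 * n / f n`. -/
theorem stmt_5 (f : ℝ → ℝ)
    (hmono : ∀ x y : ℝ, 0 < x → x ≤ y → f x ≤ f y)
    (hpos : ∀ x : ℝ, 0 < x → 0 < f x)
    (hhalf : ∀ x : ℝ, 0 < x → f x / 2 ≤ f (x / 2))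
    (hquarter : ∀ x : ℝ, 0 < x → f (x / 2) ≤ x / 4)
    (n m k : ℝ) (hn : 0 < n) (hm : 0 < m) (hk : 0 < k)
    (hlow : n - f m ≤ m) (hhigh : m ≤ n + f m) (hkle : k ≤ n + f m) :
    k / f m ≤ 4 * n / f n := by
  have hfm2 : f m ≤ m / 2 := by linarith [hhalf m hm, hquarter m hm]
  have hfn2 : f n ≤ n / 2 := by linarith [hhalf n hn, hquarter n hn]
  have hk2n : k ≤ 2 * n := by linarith
  have hn2m : n / 2 ≤ m := by linarith
  have hfnfm : f n / 2 ≤ f m :=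
    le_trans (hhalf n hn) (hmono (n / 2) m (by positivity) hn2m)
  have hfm : 0 < f m := hpos m hm
  have hfn : 0 < f n := hpos n hn
  rw [div_le_div_iff₀ hfm hfn]
  nlinarith [mul_le_mul hk2n hfn2 hfn.le (by positivity : (0:ℝ) ≤ 2*n)]
end
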